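/- arXiv:2105.13567 — 3 statements merged into one kernel-verified Lean document; each statement's English description precedes it below -/
import Mathlib

section
/- For N ≥ 2, q ∈ (0, 1/2], and ξ ∈ (-q, q), the function S(ξ, q) = sin²(π(ξ − q)) / sin²(π(ξ − q)/N) is monotonically increasing in ξ on [−q, q]. -/
open Real Set

noncomputable def S (N : ℕ) (q ξ : ℝ) : ℝ :=
  if Real.sin (π * (ξ - q) / N) = 0 then (N : ℝ) ^ 2
  else (Real.sin (π * (ξ - q))) ^ 2 / (Real.sin (π * (ξ - q) / N)) ^ 2

/-- n sin t cos(nt) ≤ sin(nt) cos t for t ∈ [0, π/2], nt ≤ π. -/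
lemma lemA (n : ℕ) (t : ℝ) (ht0 : 0 ≤ t) (ht2 : t ≤ π / 2) (htn : (n : ℝ) * t ≤ π) :
    (n : ℝ) * Real.sin t * Real.cos ((n : ℝ) * t) ≤ Real.sin ((n : ℝ) * t) * Real.cos t := by
  induction n with
  | zero => simp
  | succ n ih =>
    have hnt : (n : ℝ) * t ≤ π := by
      have : (n : ℝ) * t ≤ ((n : ℝ) + 1) * t := by nlinarith
      push_cast at htn; linarith
    have ih' := ih hnt
    have hsnt : 0 ≤ Real.sin ((n : ℝ) * t) :=
      Real.sin_nonneg_of_nonneg_of_le_pi (by positivity) hnt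
    have hst : 0 ≤ Real.sin t := Real.sin_nonneg_of_nonneg_of_le_pi ht0 (by linarith [Real.pi_pos])
    have hct : 0 ≤ Real.cos t := Real.cos_nonneg_of_mem_Icc ⟨by linarith [Real.pi_pos], ht2⟩
    have hct1 : Real.cos t ≤ 1 := Real.cos_le_one t
    have hcnt1 : Real.cos ((n : ℝ) * t) ≤ 1 := Real.cos_le_one _
    have hcnt1' : -1 ≤ Real.cos ((n : ℝ) * t) := Real.neg_one_le_cos _
    have hpyth : Real.sin t ^ 2 + Real.cos t ^ 2 = 1 := Real.sin_sq_add_cos_sq t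
    have hexp : ((n : ℝ) + 1) * t = (n : ℝ) * t + t := by ring
    push_cast
    rw [hexp, Real.sin_add, Real.cos_add]
    rcases le_or_gt (Real.cos ((n : ℝ) * t)) 0 with hc | hc
    · nlinarith [mul_nonneg (Nat.cast_nonneg n : (0:ℝ) ≤ n)
          (mul_nonneg (mul_nonneg hst hct) (neg_nonneg.2 hc)),
        mul_nonneg (Nat.cast_nonneg n : (0:ℝ) ≤ n) (mul_nonneg (mul_nonneg hsnt hst) hst),
        mul_nonneg hsnt (sq_nonneg (Real.cos t)), mul_nonneg (mul_nonneg hsnt hst) hst]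
    · nlinarith [mul_le_mul_of_nonneg_left ih' hct, mul_nonneg hsnt hst,
        mul_nonneg (Nat.cast_nonneg n : (0:ℝ) ≤ n) (mul_nonneg (mul_nonneg hsnt hst) hst),
        mul_nonneg (mul_nonneg hsnt hst) hst]

/-- |sin(nt)| ≤ n sin t for t ∈ [0, π]. -/
lemma lemB (n : ℕ) (t : ℝ) (ht0 : 0 ≤ t) (ht : t ≤ π) :
    |Real.sin ((n : ℝ) * t)| ≤ (n : ℝ) * Real.sin t := by
  induction n with
  | zero => simp
  | succ n ih =>
    have hst : 0 ≤ Real.sin t := Real.sin_nonneg_of_nonneg_of_le_pi ht0 ht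
    have hexp : ((n : ℝ) + 1) * t = (n : ℝ) * t + t := by ring
    push_cast
    rw [hexp, Real.sin_add]
    calc |Real.sin ((n:ℝ)*t) * Real.cos t + Real.cos ((n:ℝ)*t) * Real.sin t|
        ≤ |Real.sin ((n:ℝ)*t) * Real.cos t| + |Real.cos ((n:ℝ)*t) * Real.sin t| := abs_add_le _ _
      _ ≤ |Real.sin ((n:ℝ)*t)| * 1 + 1 * Real.sin t := by
          rw [abs_mul, abs_mul, abs_of_nonneg hst]
          have c1 := Real.abs_cos_le_one t
          have c2 := Real.abs_cos_le_one ((n:ℝ)*t)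
          have a1 := abs_nonneg (Real.sin ((n:ℝ)*t))
          have a2 := abs_nonneg (Real.cos t)
          have a3 := abs_nonneg (Real.cos ((n:ℝ)*t))
          nlinarith
      _ ≤ (n : ℝ) * Real.sin t + 1 * Real.sin t := by
          rw [mul_one]; linarith [ih]
      _ = ((n : ℝ) + 1) * Real.sin t := by ring

lemma key (N : ℕ) (hN : 2 ≤ N) :
    AntitoneOn (fun t => Real.sin ((N : ℝ) * t) / Real.sin t) (Set.Ioc 0 (π / N)) := by
  have hN2 : (2 : ℝ) ≤ (N : ℝ) := by exact_mod_cast hN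
  have hNpos : (0 : ℝ) < N := by linarith
  have hhalf : π / N ≤ π / 2 := div_le_div_of_nonneg_left Real.pi_pos.le two_pos hN2
  have hsin_ne : ∀ x ∈ Set.Ioc (0:ℝ) (π / N), Real.sin x ≠ 0 := by
    intro x hx
    exact (Real.sin_pos_of_pos_of_lt_pi hx.1 (lt_of_le_of_lt (hx.2.trans hhalf)
      (by linarith [Real.pi_pos]))).ne'
  apply antitoneOn_of_deriv_nonpos (convex_Ioc _ _)
  · exact ContinuousOn.div (by fun_prop) (by fun_prop) hsin_ne
  · rw [interior_Ioc]
    intro x hx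
    exact (DifferentiableAt.div (by fun_prop) (by fun_prop)
      (hsin_ne x ⟨hx.1, hx.2.le⟩)).differentiableWithinAt
  · rw [interior_Ioc]
    intro x hx
    have hxne := hsin_ne x ⟨hx.1, hx.2.le⟩
    have h0 : HasDerivAt (fun t : ℝ => (N : ℝ) * t) ((N : ℝ)) x := by
      simpa using (hasDerivAt_id x).const_mul (N : ℝ)
    have h1 : HasDerivAt (fun t => Real.sin ((N : ℝ) * t))
        (Real.cos ((N : ℝ) * x) * (N : ℝ)) x :=
      (Real.hasDerivAt_sin ((N : ℝ) * x)).comp x h0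
    have h2 : HasDerivAt (fun t => Real.sin ((N : ℝ) * t) / Real.sin t)
        ((Real.cos ((N : ℝ) * x) * (N : ℝ) * Real.sin x -
          Real.sin ((N : ℝ) * x) * Real.cos x) / Real.sin x ^ 2) x :=
      h1.div (Real.hasDerivAt_sin x) hxne
    rw [h2.deriv]
    apply div_nonpos_of_nonpos_of_nonneg _ (sq_nonneg _)
    have hNx : (N : ℝ) * x ≤ π := by
      rw [mul_comm]; exact (le_div_iff₀ hNpos).mp hx.2.le
    have hA := lemA N x hx.1.le (hx.2.le.trans hhalf) hNx
    nlinarith [hA]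

theorem stmt_0 (N : ℕ) (hN : 2 ≤ N) (q : ℝ) (hq : 0 < q) (hq' : q ≤ 1 / 2) :
    MonotoneOn (fun ξ => S N q ξ) (Set.Icc (-q) q) := by
  have hN2 : (2 : ℝ) ≤ (N : ℝ) := by exact_mod_cast hN
  have hNpos : (0 : ℝ) < N := by linarith
  have hhalf : π / N ≤ π / 2 := div_le_div_of_nonneg_left Real.pi_pos.le two_pos hN2
  -- for ξ < q, the substitution t = π(q-ξ)/N
  set h : ℝ → ℝ := fun t => Real.sin ((N : ℝ) * t) / Real.sin t with hh
  have ht_mem : ∀ ξ ∈ Set.Icc (-q) q, ξ ≠ q → π * (q - ξ) / N ∈ Set.Ioc 0 (π / N) := by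
    intro ξ hξ hne
    constructor
    · have : ξ < q := lt_of_le_of_ne hξ.2 hne
      have : 0 < q - ξ := by linarith
      positivity
    · have h1 : q - ξ ≤ 2 * q := by linarith [hξ.1]
      have : π * (q - ξ) ≤ π := by nlinarith [Real.pi_pos]
      gcongr
  have hNne : (N : ℝ) ≠ 0 := hNpos.ne'
  have hsin_pos : ∀ t ∈ Set.Ioc (0:ℝ) (π / N), 0 < Real.sin t := by
    intro t ht
    exact Real.sin_pos_of_pos_of_lt_pi ht.1
      (lt_of_le_of_lt (ht.2.trans hhalf) (by linarith [Real.pi_pos]))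
  have hNt_pi : ∀ t ∈ Set.Ioc (0:ℝ) (π / N), (N : ℝ) * t ∈ Set.Ioc (0:ℝ) π := by
    intro t ht
    constructor
    · exact mul_pos hNpos ht.1
    · rw [mul_comm]; exact (le_div_iff₀ hNpos).mp ht.2
  -- value of S off the endpoint
  have hSval : ∀ ξ ∈ Set.Icc (-q) q, ξ ≠ q → S N q ξ = (h (π * (q - ξ) / N)) ^ 2 := by
    intro ξ hξ hne
    have htm := ht_mem ξ hξ hne
    set t := π * (q - ξ) / N with hT
    have hst := hsin_pos t htm
    have harg1 : π * (ξ - q) / N = -t := by rw [hT]; ring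
    have harg2 : π * (ξ - q) = -((N : ℝ) * t) := by
      rw [hT]; field_simp; ring
    have hcond : Real.sin (π * (ξ - q) / N) ≠ 0 := by
      rw [harg1, Real.sin_neg]
      simpa using hst.ne'
    rw [S, if_neg hcond, harg1, harg2, Real.sin_neg, Real.sin_neg, hh]
    rw [div_pow, neg_pow, neg_pow]
    simp
  -- bound: 0 ≤ h t ≤ N on Ioc 0 (π/N)
  have hh_nonneg : ∀ t ∈ Set.Ioc (0:ℝ) (π / N), 0 ≤ h t := by
    intro t ht
    have := hNt_pi t ht
    exact div_nonneg (Real.sin_nonneg_of_nonneg_of_le_pi this.1.le this.2) (hsin_pos t ht).le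
  have hh_le : ∀ t ∈ Set.Ioc (0:ℝ) (π / N), h t ≤ (N : ℝ) := by
    intro t ht
    have hmem := hNt_pi t ht
    have hB := lemB N t ht.1.le (by
      nlinarith [hmem.2, mul_nonneg (by linarith : (0:ℝ) ≤ (N:ℝ) - 1) ht.1.le])
    have hst := hsin_pos t ht
    rw [hh]
    rw [div_le_iff₀ hst]
    calc Real.sin ((N : ℝ) * t) ≤ |Real.sin ((N : ℝ) * t)| := le_abs_self _
      _ ≤ (N : ℝ) * Real.sin t := hB
  have hSq : S N q q = (N : ℝ) ^ 2 := by
    rw [S, if_pos]; simp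
  intro ξ1 hξ1 ξ2 hξ2 hle
  simp only
  rcases eq_or_ne ξ2 q with h2 | h2
  · subst h2
    rcases eq_or_ne ξ1 ξ2 with h1 | h1
    · subst h1; exact le_refl _
    · rw [hSval ξ1 hξ1 h1, hSq]
      have htm := ht_mem ξ1 hξ1 h1
      exact pow_le_pow_left₀ (hh_nonneg _ htm) (hh_le _ htm) 2
  · have h1 : ξ1 ≠ q := by
      intro h; exact h2 (le_antisymm hξ2.2 (h ▸ hle))
    rw [hSval ξ1 hξ1 h1, hSval ξ2 hξ2 h2]
    have htm1 := ht_mem ξ1 hξ1 h1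
    have htm2 := ht_mem ξ2 hξ2 h2
    have hts : π * (q - ξ2) / N ≤ π * (q - ξ1) / N := by
      gcongr
    have := key N hN htm2 htm1 hts
    exact pow_le_pow_left₀ (hh_nonneg _ htm1) this 2
end

section
/- For N ≥ 2 and q ∈ (0, 1/2], the function f(ξ) = (S(ξ, q) − S(ξ, −q)) / (S(ξ, q) + S(ξ, −q)) is strictly monotonically increasing on (−q, q). -/
open Real Set

noncomputable def f (N : ℕ) (q ξ : ℝ) : ℝ :=
  (S N q ξ - S N (-q) ξ) / (S N q ξ + S N (-q) ξ)

/-! The substitution `u = π (q - ξ)` turns `S(ξ, q)` into `(sin u / sin (u / N))²` with `u ∈ (0, π)`,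
and `S(ξ, -q)` likewise with `u = π (ξ + q)`. The ratio `sin u / sin (u / N)` is positive and
strictly decreasing on `(0, π)`, so `S(·, q)` increases and `S(·, -q)` decreases on `(-q, q)`;
then `f = 1 - 2 S(·, -q) / (S(·, q) + S(·, -q))` increases. -/

theorem StrictMonoOn.sub_div_add {α : Type*} [Preorder α] {s : Set α} {A B : α → ℝ}
    (hA : StrictMonoOn A s) (hB : StrictAntiOn B s) (hA₀ : ∀ x ∈ s, 0 < A x)
    (hB₀ : ∀ x ∈ s, 0 < B x) :
    StrictMonoOn (fun x => (A x - B x) / (A x + B x)) s := by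
  intro x hx y hy hxy
  have hAxy := hA hx hy hxy
  have hBxy := hB hx hy hxy
  have := hA₀ x hx; have := hA₀ y hy; have := hB₀ x hx; have := hB₀ y hy
  rw [div_lt_div_iff₀ (by positivity) (by positivity)]
  nlinarith

section SinRatio

variable {N : ℝ}

theorem sin_div_pos_of_mem_Ioo (hN : 1 ≤ N) {u : ℝ} (hu : u ∈ Ioo 0 π) : 0 < sin (u / N) :=
  sin_pos_of_pos_of_lt_pi (div_pos hu.1 (by linarith))
    ((div_le_self hu.1.le hN).trans_lt hu.2)

theorem mul_cos_mul_sin_div_lt_sin_mul_cos_div (hN : 1 < N) {a : ℝ} (ha : a ∈ Ioo 0 π) :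
    N * cos a * sin (a / N) < sin a * cos (a / N) := by
  have hN₀ : N ≠ 0 := by positivity
  set g : ℝ → ℝ := fun t => sin t * cos (t / N) - N * cos t * sin (t / N)
  have hg : ∀ t, HasDerivAt g ((N - 1 / N) * (sin t * sin (t / N))) t := by
    intro t
    have hdiv : HasDerivAt (fun t : ℝ => t / N) (1 / N) t := by
      simpa using (hasDerivAt_id t).div_const N
    refine (((hasDerivAt_sin t).mul hdiv.cos).sub
      (((hasDerivAt_cos t).const_mul N).mul hdiv.sin)).congr_deriv ?_
    field_simp
    ring
  have hmono : StrictMonoOn g (Icc 0 π) := by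
    refine strictMonoOn_of_deriv_pos (convex_Icc 0 π)
      (fun t _ => (hg t).continuousAt.continuousWithinAt) fun t ht => ?_
    rw [interior_Icc] at ht
    rw [(hg t).deriv]
    have : 1 / N < N := by rw [div_lt_iff₀ (by linarith)]; nlinarith
    exact mul_pos (by linarith) (mul_pos (sin_pos_of_pos_of_lt_pi ht.1 ht.2)
      (sin_div_pos_of_mem_Ioo hN.le ht))
  have := hmono (left_mem_Icc.mpr pi_pos.le) (Ioo_subset_Icc_self ha) ha.1
  simp only [g, sin_zero, cos_zero, zero_div, zero_mul, mul_zero, sub_zero] at this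
  linarith

noncomputable def sinRatio (N u : ℝ) : ℝ := sin u / sin (u / N)

theorem sinRatio_pos (hN : 1 ≤ N) {u : ℝ} (hu : u ∈ Ioo 0 π) : 0 < sinRatio N u :=
  div_pos (sin_pos_of_pos_of_lt_pi hu.1 hu.2) (sin_div_pos_of_mem_Ioo hN hu)

theorem sinRatio_strictAntiOn (hN : 1 < N) : StrictAntiOn (sinRatio N) (Ioo 0 π) := by
  have hderiv : ∀ u ∈ Ioo 0 π, HasDerivAt (sinRatio N)
      ((cos u * sin (u / N) - sin u * (cos (u / N) * (1 / N))) / sin (u / N) ^ 2) u := by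
    intro u hu
    have hdiv : HasDerivAt (fun t : ℝ => t / N) (1 / N) u := by
      simpa using (hasDerivAt_id u).div_const N
    exact (hasDerivAt_sin u).div hdiv.sin (sin_div_pos_of_mem_Ioo hN.le hu).ne'
  refine strictAntiOn_of_deriv_neg (convex_Ioo 0 π)
    (fun u hu => (hderiv u hu).continuousAt.continuousWithinAt) fun u hu => ?_
  rw [interior_Ioo] at hu
  rw [(hderiv u hu).deriv]
  refine div_neg_of_neg_of_pos ?_ (pow_pos (sin_div_pos_of_mem_Ioo hN.le hu) 2)
  have := mul_cos_mul_sin_div_lt_sin_mul_cos_div hN hu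
  have hN₀ : 0 < N := by linarith
  rw [← mul_lt_mul_iff_of_pos_left hN₀]
  field_simp
  linarith

theorem sq_sinRatio_strictAntiOn (hN : 1 < N) :
    StrictAntiOn (fun u => sinRatio N u ^ 2) (Ioo 0 π) := fun _ hu _ hv huv =>
  pow_lt_pow_left₀ (sinRatio_strictAntiOn hN hu hv huv) (sinRatio_pos hN.le hv).le two_ne_zero

end SinRatio

theorem S_eq_sq_sinRatio {N : ℕ} (hN : 1 ≤ N) {r ξ u : ℝ} (hu : u ∈ Ioo 0 π)
    (h : π * (ξ - r) = u ∨ π * (ξ - r) = -u) : S N r ξ = sinRatio N u ^ 2 := by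
  have hsin := sin_div_pos_of_mem_Ioo (N := N) (by exact_mod_cast hN) hu
  rcases h with h | h <;>
    simp [S, sinRatio, h, neg_div, sin_neg, hsin.ne', div_pow]

theorem stmt_3_general (N : ℕ) (hN : 2 ≤ N) (q : ℝ) (hq' : q ≤ 1 / 2) :
    StrictMonoOn (fun ξ => f N q ξ) (Set.Ioo (-q) q) := by
  have hN₁ : (1 : ℝ) < N := by exact_mod_cast hN
  have hπ := pi_pos
  have hmapsA : MapsTo (fun ξ => π * (q - ξ)) (Ioo (-q) q) (Ioo 0 π) :=
    fun ξ hξ => ⟨by nlinarith [hξ.2], by nlinarith [hξ.1]⟩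
  have hmapsB : MapsTo (fun ξ => π * (ξ + q)) (Ioo (-q) q) (Ioo 0 π) :=
    fun ξ hξ => ⟨by nlinarith [hξ.1], by nlinarith [hξ.2]⟩
  have hSA : EqOn (fun ξ => sinRatio N (π * (q - ξ)) ^ 2) (S N q) (Ioo (-q) q) :=
    fun ξ hξ => (S_eq_sq_sinRatio (by omega) (hmapsA hξ) (.inr (by ring))).symm
  have hSB : EqOn (fun ξ => sinRatio N (π * (ξ + q)) ^ 2) (S N (-q)) (Ioo (-q) q) :=
    fun ξ hξ => (S_eq_sq_sinRatio (by omega) (hmapsB hξ) (.inl (by ring))).symm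
  refine StrictMonoOn.sub_div_add (A := S N q) (B := S N (-q)) ?_ ?_ ?_ ?_
  · refine ((sq_sinRatio_strictAntiOn hN₁).comp (fun x _ y _ hxy => ?_) hmapsA).congr hSA
    nlinarith
  · refine ((sq_sinRatio_strictAntiOn hN₁).comp_strictMonoOn (fun x _ y _ hxy => ?_)
      hmapsB).congr hSB
    nlinarith
  · exact fun ξ hξ => hSA hξ ▸ pow_pos (sinRatio_pos hN₁.le (hmapsA hξ)) 2
  · exact fun ξ hξ => hSB hξ ▸ pow_pos (sinRatio_pos hN₁.le (hmapsB hξ)) 2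

theorem stmt_3 (N : ℕ) (hN : 2 ≤ N) (q : ℝ) (hq : 0 < q) (hq' : q ≤ 1 / 2) :
    StrictMonoOn (fun ξ => f N q ξ) (Set.Ioo (-q) q) :=
  stmt_3_general N hN q hq'
end

section
/- For N ≥ 2, the function D(θ) = sin(πθ)/(N sin(πθ/N)) is strictly decreasing on (0, 1), hence D(θ)² is strictly decreasing on (0, 1). -/
open Real Set

private lemma aux_g_deriv (N : ℕ) (x : ℝ) :
    HasDerivAt (fun y : ℝ => (N : ℝ) * Real.cos (N * y) * Real.sin y - Real.sin (N * y) * Real.cos y)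
      ((1 - (N : ℝ) ^ 2) * Real.sin (N * x) * Real.sin x) x := by
  have hlin : HasDerivAt (fun y : ℝ => (N : ℝ) * y) (N : ℝ) x := by
    simpa using (hasDerivAt_id x).const_mul (N : ℝ)
  have hcos := hlin.cos
  have hsinN := hlin.sin
  have hsin := Real.hasDerivAt_sin x
  have hcos1 := Real.hasDerivAt_cos x
  have h := ((hcos.const_mul (N : ℝ)).mul hsin).sub (hsinN.mul hcos1)
  exact h.congr_deriv (by ring)

private lemma aux_g_neg (N : ℕ) (hN : 2 ≤ N) {x : ℝ} (hx0 : 0 < x) (hx1 : x < π / N) :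
    (N : ℝ) * Real.cos (N * x) * Real.sin x - Real.sin (N * x) * Real.cos x < 0 := by
  have hNpos : (0 : ℝ) < N := by positivity
  have hpi := Real.pi_pos
  set g : ℝ → ℝ := fun y => (N : ℝ) * Real.cos (N * y) * Real.sin y - Real.sin (N * y) * Real.cos y
    with hg
  have hanti : StrictAntiOn g (Set.Icc 0 (π / N)) := by
    apply strictAntiOn_of_deriv_neg (convex_Icc _ _)
    · exact Continuous.continuousOn (by fun_prop)
    · intro y hy
      rw [interior_Icc] at hy
      rw [(aux_g_deriv N y).deriv]
      have hs1 : 0 < Real.sin ((N : ℝ) * y) := by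
        apply Real.sin_pos_of_pos_of_lt_pi (mul_pos hNpos hy.1)
        calc (N : ℝ) * y < N * (π / N) := (mul_lt_mul_iff_right₀ hNpos).2 hy.2
          _ = π := by field_simp
      have hs2 : 0 < Real.sin y := by
        apply Real.sin_pos_of_pos_of_lt_pi hy.1
        calc y < π / N := hy.2
          _ ≤ π := by
            rw [div_le_iff₀ hNpos]
            have h2N : (2 : ℝ) ≤ N := by exact_mod_cast hN
            nlinarith
      have hN2 : (1 : ℝ) - (N : ℝ) ^ 2 < 0 := by
        have : (2 : ℝ) ≤ N := by exact_mod_cast hN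
        nlinarith
      nlinarith [mul_pos hs1 hs2]
  have h0 : (0 : ℝ) ∈ Set.Icc 0 (π / N) := ⟨le_refl 0, by positivity⟩
  have hx : x ∈ Set.Icc 0 (π / N) := ⟨hx0.le, hx1.le⟩
  have := hanti h0 hx hx0
  simpa [hg] using this

theorem stmt_16 (N : ℕ) (hN : 2 ≤ N) :
    StrictAntiOn (fun θ : ℝ => Real.sin (π * θ) / (N * Real.sin (π * θ / N)))
      (Set.Ioo 0 1) ∧
    StrictAntiOn (fun θ : ℝ => (Real.sin (π * θ) / (N * Real.sin (π * θ / N))) ^ 2)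
      (Set.Ioo 0 1) := by
  have hNpos : (0 : ℝ) < N := by positivity
  have hpi := Real.pi_pos
  -- positivity of denominator and of f on Ioo 0 1
  have hden : ∀ θ ∈ Set.Ioo (0:ℝ) 1, 0 < Real.sin (π * θ / N) := by
    intro θ hθ
    apply Real.sin_pos_of_pos_of_lt_pi
    · have := hθ.1; positivity
    · rw [div_lt_iff₀ hNpos]
      have h1 : π * θ < π * 1 := (mul_lt_mul_iff_right₀ hpi).2 hθ.2
      have h2 : π * 1 ≤ π * N := by
        have : (1:ℝ) ≤ N := by exact_mod_cast Nat.one_le_of_lt hN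
        nlinarith
      nlinarith
  have hfpos : ∀ θ ∈ Set.Ioo (0:ℝ) 1,
      0 < Real.sin (π * θ) / (N * Real.sin (π * θ / N)) := by
    intro θ hθ
    apply div_pos
    · exact Real.sin_pos_of_pos_of_lt_pi (by have := hθ.1; positivity)
        (by have := hθ.2; nlinarith)
    · exact mul_pos hNpos (hden θ hθ)
  have hmain : StrictAntiOn (fun θ : ℝ => Real.sin (π * θ) / (N * Real.sin (π * θ / N)))
      (Set.Ioo 0 1) := by
    apply strictAntiOn_of_deriv_neg (convex_Ioo _ _)
    · apply ContinuousOn.div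
      · exact Continuous.continuousOn (by fun_prop)
      · exact Continuous.continuousOn (by fun_prop)
      · intro θ hθ
        exact ne_of_gt (mul_pos hNpos (hden θ hθ))
    · intro θ hθ
      rw [interior_Ioo] at hθ
      have hdne : (N : ℝ) * Real.sin (π * θ / N) ≠ 0 := ne_of_gt (mul_pos hNpos (hden θ hθ))
      have hnum : HasDerivAt (fun y : ℝ => Real.sin (π * y)) (Real.cos (π * θ) * π) θ := by
        simpa using ((hasDerivAt_id θ).const_mul π).sin
      have hinner : HasDerivAt (fun y : ℝ => π * y / N) (π / N) θ := by
        simpa [mul_div_assoc] using (((hasDerivAt_id θ).const_mul π).div_const (N : ℝ))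
      have hd : HasDerivAt (fun y : ℝ => (N : ℝ) * Real.sin (π * y / N))
          ((N : ℝ) * (Real.cos (π * θ / N) * (π / N))) θ := (hinner.sin).const_mul (N : ℝ)
      have hdiv := hnum.div hd hdne
      rw [show deriv (fun θ : ℝ => Real.sin (π * θ) / (N * Real.sin (π * θ / N))) θ = _ from hdiv.deriv]
      apply div_neg_of_neg_of_pos
      · -- numerator negative
        have hx0 : 0 < π * θ / N := by have := hθ.1; positivity
        have hx1 : π * θ / N < π / N := by
          rw [div_lt_div_iff_of_pos_right hNpos]
          nlinarith [hθ.2]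
        have key := aux_g_neg N hN hx0 hx1
        have hNx : (N : ℝ) * (π * θ / N) = π * θ := by field_simp
        rw [hNx] at key
        have h2 : Real.cos (π * θ) * π * ((N : ℝ) * Real.sin (π * θ / N)) -
            Real.sin (π * θ) * ((N : ℝ) * (Real.cos (π * θ / N) * (π / N))) =
            π * ((N : ℝ) * Real.cos (π * θ) * Real.sin (π * θ / N) -
              Real.sin (π * θ) * Real.cos (π * θ / N)) := by
          field_simp
        rw [h2]
        exact mul_neg_of_pos_of_neg hpi key
      · have := hden θ hθ
        positivity
  refine ⟨hmain, ?_⟩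
  intro a ha b hb hab
  have h1 := hmain ha hb hab
  have h2 := hfpos b hb
  simpa using pow_lt_pow_left₀ h1 h2.le (by norm_num : 2 ≠ 0)
end
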